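/- With the same data (crossed module E → G, G acting on X and Y, G-equivariant f : Y → X, im(∂) acting trivially on X and Y), the second Peiffer relation holds: ∂(ξ⊗e) ▷ (ζ⊗d) = (ξ₍₁₎⊗e)·(ζ⊗d)·S(ξ₍₂₎⊗e), for all ξ⊗e, ζ⊗d ∈ Fun(X)⊗ℂ[E]. -/

import Mathlib

open TensorProduct

noncomputable section

/-- The comultiplication of the group Hopf algebra `ℂ[K]`: `Δ(k) = k ⊗ k`. -/
def gaComul (K : Type*) [Group K] :
    MonoidAlgebra ℂ K →ₗ[ℂ] MonoidAlgebra ℂ K ⊗[ℂ] MonoidAlgebra ℂ K :=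
  (Finsupp.lsum ℂ fun k => LinearMap.toSpanSingleton ℂ _
    (MonoidAlgebra.single k (1 : ℂ) ⊗ₜ[ℂ] MonoidAlgebra.single k (1 : ℂ))) ∘ₗ
    (MonoidAlgebra.coeffLinearEquiv ℂ).toLinearMap

/-- The counit of the group Hopf algebra `ℂ[K]`: `ε(k) = 1`. -/
def gaCounit (K : Type*) [Group K] : MonoidAlgebra ℂ K →ₗ[ℂ] ℂ :=
  (Finsupp.lsum ℂ fun _ => (LinearMap.id : ℂ →ₗ[ℂ] ℂ)) ∘ₗ
    (MonoidAlgebra.coeffLinearEquiv ℂ).toLinearMap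

/-- The comultiplication of `Fun(Y)`: `Δ(φ)(y ⊗ y') = φ(y y')`, concretely
`Δ(φ) = ∑ₐ δₐ ⊗ φ(a ⬝ ·)`. -/
def funComul (Y : Type*) [Group Y] [Fintype Y] [DecidableEq Y] :
    (Y → ℂ) →ₗ[ℂ] (Y → ℂ) ⊗[ℂ] (Y → ℂ) :=
  ∑ a : Y,
    (TensorProduct.mk ℂ (Y → ℂ) (Y → ℂ) (Pi.single a (1 : ℂ))) ∘ₗ
      LinearMap.funLeft ℂ ℂ (fun y => a * y)

variable (Y G X E : Type*) [Group Y] [Group G] [Group X] [Group E]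
  [Fintype Y] [Fintype G] [Fintype X] [Fintype E] [DecidableEq Y]

/-- The action of `ℂ[G]` on `Fun(Y)`: `(g ▷ ψ)(y) = ψ(g⁻¹ ▷ y)`. -/
def actFunY (ρ : G →* MulAut Y) :
    MonoidAlgebra ℂ G →ₗ[ℂ] (Y → ℂ) →ₗ[ℂ] (Y → ℂ) :=
  (Finsupp.lsum ℂ fun g => LinearMap.toSpanSingleton ℂ _
    (LinearMap.funLeft ℂ ℂ (fun y => ρ g⁻¹ y))) ∘ₗ
    (MonoidAlgebra.coeffLinearEquiv ℂ).toLinearMap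

/-- The multiplication `(φ ⊗ g) ⬝ (ψ ⊗ h) = φ (g ▷ ψ) ⊗ g h` of the crossed product
`Fun(Y) ⋊ ℂ[G]`. -/
def cpMul (ρ : G →* MulAut Y) :
    ((Y → ℂ) ⊗[ℂ] MonoidAlgebra ℂ G) ⊗[ℂ] ((Y → ℂ) ⊗[ℂ] MonoidAlgebra ℂ G) →ₗ[ℂ]
      (Y → ℂ) ⊗[ℂ] MonoidAlgebra ℂ G :=
  (TensorProduct.map (LinearMap.mul' ℂ (Y → ℂ)) LinearMap.id) ∘ₗ
  (TensorProduct.assoc ℂ (Y → ℂ) (Y → ℂ) (MonoidAlgebra ℂ G)).symm.toLinearMap ∘ₗ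
  (TensorProduct.map LinearMap.id
    ((TensorProduct.map (TensorProduct.lift (actFunY Y G ρ))
        (LinearMap.mul' ℂ (MonoidAlgebra ℂ G))) ∘ₗ
      (TensorProduct.tensorTensorTensorComm ℂ (MonoidAlgebra ℂ G) (MonoidAlgebra ℂ G)
        (Y → ℂ) (MonoidAlgebra ℂ G)).toLinearMap)) ∘ₗ
  (TensorProduct.assoc ℂ (Y → ℂ) (MonoidAlgebra ℂ G ⊗[ℂ] MonoidAlgebra ℂ G)
    ((Y → ℂ) ⊗[ℂ] MonoidAlgebra ℂ G)).toLinearMap ∘ₗ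
  (TensorProduct.map (TensorProduct.map LinearMap.id (gaComul G)) LinearMap.id)

/-- The unit `1 ⊗ 1` of `Fun(Y) ⋊ ℂ[G]`. -/
def cpOne : (Y → ℂ) ⊗[ℂ] MonoidAlgebra ℂ G :=
  (1 : Y → ℂ) ⊗ₜ[ℂ] (1 : MonoidAlgebra ℂ G)

/-- The comultiplication `Δ(φ ⊗ g) = (φ₍₁₎ ⊗ g) ⊗ (φ₍₂₎ ⊗ g)` of `Fun(Y) ⋊ ℂ[G]`. -/
def cpComul :
    (Y → ℂ) ⊗[ℂ] MonoidAlgebra ℂ G →ₗ[ℂ]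
      ((Y → ℂ) ⊗[ℂ] MonoidAlgebra ℂ G) ⊗[ℂ] ((Y → ℂ) ⊗[ℂ] MonoidAlgebra ℂ G) :=
  (TensorProduct.tensorTensorTensorComm ℂ (Y → ℂ) (Y → ℂ)
      (MonoidAlgebra ℂ G) (MonoidAlgebra ℂ G)).toLinearMap ∘ₗ
    TensorProduct.map (funComul Y) (gaComul G)

/-- The counit `ε(φ ⊗ g) = φ(1)` of `Fun(Y) ⋊ ℂ[G]`. -/
def cpCounit : (Y → ℂ) ⊗[ℂ] MonoidAlgebra ℂ G →ₗ[ℂ] ℂ :=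
  TensorProduct.lift
    ((LinearMap.proj (1 : Y) : (Y → ℂ) →ₗ[ℂ] ℂ).smulRight (gaCounit G))

/-- The action `(φ ⊗ g) ▷ (ξ ⊗ e) = φ(1) (g ▷ ξ) ⊗ (g ▷ e)` of `Fun(Y) ⋊ ℂ[G]` on
`Fun(X) ⊗ ℂ[E]`. -/
def gexyAct (ρX : G →* MulAut X) (ρE : G →* MulAut E) :
    (Y → ℂ) ⊗[ℂ] MonoidAlgebra ℂ G →ₗ[ℂ]
      ((X → ℂ) ⊗[ℂ] MonoidAlgebra ℂ E) →ₗ[ℂ] (X → ℂ) ⊗[ℂ] MonoidAlgebra ℂ E :=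
  TensorProduct.lift
    ((LinearMap.proj (1 : Y) : (Y → ℂ) →ₗ[ℂ] ℂ).smulRight
      ((Finsupp.lsum ℂ fun g => LinearMap.toSpanSingleton ℂ _
        (TensorProduct.map (LinearMap.funLeft ℂ ℂ (fun x => ρX g⁻¹ x))
          (MonoidAlgebra.mapDomainLinearMap ℂ ℂ (fun e : E => ρE g e)))) ∘ₗ
        (MonoidAlgebra.coeffLinearEquiv ℂ).toLinearMap))

variable [DecidableEq X]

/-- The boundary `∂(ξ ⊗ e) = f*ξ ⊗ ∂(e)` from `Fun(X) ⊗ ℂ[E]` to `Fun(Y) ⋊ ℂ[G]`. -/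
def gexyBdry (f : Y →* X) (d : E →* G) :
    (X → ℂ) ⊗[ℂ] MonoidAlgebra ℂ E →ₗ[ℂ] (Y → ℂ) ⊗[ℂ] MonoidAlgebra ℂ G :=
  TensorProduct.map (LinearMap.funLeft ℂ ℂ f) (MonoidAlgebra.mapDomainLinearMap ℂ ℂ d)

/-- The comultiplication of the tensor product Hopf algebra `Fun(X) ⊗ ℂ[E]`. -/
def taComul :
    (X → ℂ) ⊗[ℂ] MonoidAlgebra ℂ E →ₗ[ℂ]
      ((X → ℂ) ⊗[ℂ] MonoidAlgebra ℂ E) ⊗[ℂ] ((X → ℂ) ⊗[ℂ] MonoidAlgebra ℂ E) :=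
  (TensorProduct.tensorTensorTensorComm ℂ (X → ℂ) (X → ℂ)
      (MonoidAlgebra ℂ E) (MonoidAlgebra ℂ E)).toLinearMap ∘ₗ
    TensorProduct.map (funComul X) (gaComul E)

/-- The antipode `S(ξ ⊗ e) = S(ξ) ⊗ e⁻¹` of the tensor product Hopf algebra
`Fun(X) ⊗ ℂ[E]`, where `S(ξ)(x) = ξ(x⁻¹)`. -/
def taAntipode :
    (X → ℂ) ⊗[ℂ] MonoidAlgebra ℂ E →ₗ[ℂ] (X → ℂ) ⊗[ℂ] MonoidAlgebra ℂ E :=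
  TensorProduct.map (LinearMap.funLeft ℂ ℂ (fun x : X => x⁻¹))
    (MonoidAlgebra.mapDomainLinearMap ℂ ℂ (fun e : E => e⁻¹))

/-- The "quantum adjoint action" `a ⊗ b ↦ a₍₁₎ b S(a₍₂₎)` of `Fun(X) ⊗ ℂ[E]` on
itself. -/
def taAdjoint :
    ((X → ℂ) ⊗[ℂ] MonoidAlgebra ℂ E) ⊗[ℂ] ((X → ℂ) ⊗[ℂ] MonoidAlgebra ℂ E) →ₗ[ℂ]
      (X → ℂ) ⊗[ℂ] MonoidAlgebra ℂ E :=
  (LinearMap.mul' ℂ ((X → ℂ) ⊗[ℂ] MonoidAlgebra ℂ E)) ∘ₗ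
  (TensorProduct.map LinearMap.id
    (LinearMap.mul' ℂ ((X → ℂ) ⊗[ℂ] MonoidAlgebra ℂ E))) ∘ₗ
  (TensorProduct.map LinearMap.id
    (TensorProduct.comm ℂ ((X → ℂ) ⊗[ℂ] MonoidAlgebra ℂ E)
      ((X → ℂ) ⊗[ℂ] MonoidAlgebra ℂ E)).toLinearMap) ∘ₗ
  (TensorProduct.assoc ℂ ((X → ℂ) ⊗[ℂ] MonoidAlgebra ℂ E)
    ((X → ℂ) ⊗[ℂ] MonoidAlgebra ℂ E) ((X → ℂ) ⊗[ℂ] MonoidAlgebra ℂ E)).toLinearMap ∘ₗ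
  (TensorProduct.map (TensorProduct.map LinearMap.id (taAntipode X E))
    LinearMap.id) ∘ₗ
  (TensorProduct.map (taComul X E) LinearMap.id)

/-! On pure tensors `ξ ⊗ e` and `ζ ⊗ k` both sides equal `ξ(1) ζ ⊗ e k e⁻¹`. On the left,
`∂(ξ ⊗ e) = f*ξ ⊗ ∂e` acts through its counit `ξ(f 1) = ξ(1)` and by `∂e`, which fixes `ζ`
because `im ∂` acts trivially on `X`, and conjugates `k` by `e` by the second Peiffer identity
of `E → G`. On the right the `ℂ[E]`-factors multiply to `e k e⁻¹`, while the `Fun(X)`-factors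
collapse to `ξ(1) ζ`: the adjoint action of the commutative Hopf algebra `Fun(X)` on itself
factors through its counit. -/

section

open MonoidAlgebra

theorem gaComul_single {K : Type*} [Group K] (k : K) (r : ℂ) :
    gaComul K (single k r) = single k 1 ⊗ₜ single k r := by
  simp [gaComul, coeffLinearEquiv, ← tmul_smul]

theorem funComul_apply {X : Type*} [Group X] [Fintype X] [DecidableEq X] (ξ : X → ℂ) :
    funComul X ξ = ∑ a, Pi.single a 1 ⊗ₜ fun x => ξ (a * x) := by
  simp only [funComul, LinearMap.coe_sum, Finset.sum_apply, LinearMap.comp_apply, mk_apply]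
  rfl

theorem sum_single_mul_mul_apply_mul_inv {X : Type*} [Group X] [Fintype X] [DecidableEq X]
    (ξ ζ : X → ℂ) :
    ∑ a, Pi.single a 1 * (ζ * fun x => ξ (a * x⁻¹)) = ξ 1 • ζ := by
  funext x
  simp [Finset.sum_apply, Pi.single_apply, mul_comm]

theorem taComul_tmul_single {X E : Type*} [Group X] [Group E] [Fintype X] [DecidableEq X]
    (ξ : X → ℂ) (e : E) (r : ℂ) :
    taComul X E (ξ ⊗ₜ single e r) =
      ∑ a, (Pi.single a 1 ⊗ₜ single e 1) ⊗ₜ ((fun x => ξ (a * x)) ⊗ₜ single e r) := by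
  simp [taComul, funComul_apply, gaComul_single, sum_tmul]

theorem taAntipode_tmul_single {X E : Type*} [Group X] [Group E] (ξ : X → ℂ) (e : E) (r : ℂ) :
    taAntipode X E (ξ ⊗ₜ single e r) = (fun x => ξ x⁻¹) ⊗ₜ single e⁻¹ r := by
  rw [taAntipode, map_tmul, mapDomainLinearMap_single]
  rfl

theorem taAdjoint_tmul_single {X E : Type*} [Group X] [Group E] [Fintype X] [DecidableEq X]
    (ξ : X → ℂ) (e : E) (r : ℂ) (ζ : X → ℂ) (k : E) (s : ℂ) :
    taAdjoint X E ((ξ ⊗ₜ single e r) ⊗ₜ (ζ ⊗ₜ single k s)) =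
      ξ 1 • (ζ ⊗ₜ single (e * k * e⁻¹) (r * s)) := by
  simp only [taAdjoint, LinearMap.comp_apply, map_tmul, taComul_tmul_single, sum_tmul, map_sum,
    LinearEquiv.coe_coe, LinearMap.id_apply, assoc_tmul, comm_tmul, LinearMap.mul'_apply,
    taAntipode_tmul_single, Algebra.TensorProduct.tmul_mul_tmul, single_mul_single]
  rw [← sum_tmul, sum_single_mul_mul_apply_mul_inv, smul_tmul', one_mul, mul_comm s, mul_assoc]

theorem gexyAct_tmul_single {Y G X E : Type*} [Group Y] [Group G] [Group X] [Group E]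
    (ρX : G →* MulAut X) (ρE : G →* MulAut E) (φ : Y → ℂ) (g : G) (r : ℂ) (ζ : X → ℂ) (k : E)
    (s : ℂ) :
    gexyAct Y G X E ρX ρE (φ ⊗ₜ single g r) (ζ ⊗ₜ single k s) =
      (φ 1 * r) • ((fun x => ζ (ρX g⁻¹ x)) ⊗ₜ single (ρE g k) s) := by
  simp only [gexyAct, lift.tmul, LinearMap.smulRight_apply, LinearMap.proj_apply,
    LinearMap.comp_apply, LinearEquiv.coe_coe, coeffLinearEquiv_apply, coeff_single,
    Finsupp.lsum_single, LinearMap.toSpanSingleton_apply, LinearMap.smul_apply, map_tmul,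
    mapDomainLinearMap_single, smul_smul]
  rfl

theorem gexyBdry_tmul_single {Y G X E : Type*} [Group Y] [Group G] [Group X] [Group E]
    (f : Y →* X) (d : E →* G) (ξ : X → ℂ) (e : E) (r : ℂ) :
    gexyBdry Y G X E f d (ξ ⊗ₜ single e r) = (fun y => ξ (f y)) ⊗ₜ single (d e) r := by
  rw [gexyBdry, map_tmul, mapDomainLinearMap_single]
  rfl

end

theorem stmt12 (d : E →* G) (ρGE : G →* MulAut E)
    (ρX : G →* MulAut X) (f : Y →* X)
    (grp_peiffer2 : ∀ e e' : E, ρGE (d e) e' = e * e' * e⁻¹)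
    (htrivX : ∀ (e : E) (x : X), ρX (d e) x = x) :
    TensorProduct.lift (gexyAct Y G X E ρX ρGE) ∘ₗ
        TensorProduct.map (gexyBdry Y G X E f d) LinearMap.id =
      taAdjoint X E := by
  ext a e b k
  simp only [AlgebraTensorModule.curry_apply, curry_apply, LinearMap.coe_comp,
    Function.comp_apply, LinearMap.coe_restrictScalars, LinearMap.coe_single,
    MonoidAlgebra.lsingle_apply, lift.tmul, map_tmul, LinearMap.id_apply]
  have hfix : (fun x => (Pi.single b 1 : X → ℂ) (ρX (d e)⁻¹ x)) = Pi.single b 1 := by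
    simp only [← map_inv, htrivX]
  rw [gexyBdry_tmul_single, gexyAct_tmul_single, taAdjoint_tmul_single, grp_peiffer2, hfix]
  simp only [map_one, mul_one]

end
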